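/- Hardy estimate for the corrector gradient: Let α ≥ 1, 0 < ε < 1, ε^α ≤ η ≤ ε, and δ > 0. Suppose g: ℝ³ → [0,∞) satisfies g(x) ≤ ε^α/|x|² for δε^α ≤ |x| ≤ η/2 and g = 0 elsewhere. Then for every φ ∈ C^∞(ℝ³) with φ = 0 on B_{δε^α}(0), one has ∫_{ℝ³} g(x) |φ(x)|² dx ≤ C η ∫_{B_{η/2}} |∇φ|² dx, with C depending only on δ. -/

import Mathlib

open MeasureTheory

open scoped ENNReal NNReal

noncomputable section

lemma cs_int {ν : Measure ℝ} [IsFiniteMeasure ν] {u v : ℝ → ℝ}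
    (hu : MemLp u 2 ν) (hv : MemLp v 2 ν) :
    (∫ t, u t * v t ∂ν) ^ 2 ≤ (∫ t, (u t) ^ 2 ∂ν) * (∫ t, (v t) ^ 2 ∂ν) := by
  have h2 : (ENNReal.ofReal (2:ℝ)) = 2 := by norm_num
  have hconj : (2:ℝ).HolderConjugate 2 := Real.HolderConjugate.two_two
  have hu' : MemLp (fun t => |u t|) (ENNReal.ofReal (2:ℝ)) ν := by
    rw [h2]; simpa using hu.norm
  have hv' : MemLp (fun t => |v t|) (ENNReal.ofReal (2:ℝ)) ν := by
    rw [h2]; simpa using hv.norm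
  have key := integral_mul_le_Lp_mul_Lq_of_nonneg hconj
    (Filter.Eventually.of_forall (fun t => abs_nonneg (u t)))
    (Filter.Eventually.of_forall (fun t => abs_nonneg (v t))) hu' hv'
  have habs : |∫ t, u t * v t ∂ν| ≤ ∫ t, |u t| * |v t| ∂ν := by
    simpa [Real.norm_eq_abs, abs_mul] using
      norm_integral_le_integral_norm (μ := ν) (fun t => u t * v t)
  have hA : ∫ t, |u t| ^ (2:ℝ) ∂ν = ∫ t, (u t)^2 ∂ν := by
    refine integral_congr_ae (Filter.Eventually.of_forall fun t => ?_)
    show |u t| ^ (2:ℝ) = u t ^ 2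
    rw [show ((2:ℝ)) = ((2:ℕ):ℝ) by norm_num, Real.rpow_natCast, sq_abs]
  have hB : ∫ t, |v t| ^ (2:ℝ) ∂ν = ∫ t, (v t)^2 ∂ν := by
    refine integral_congr_ae (Filter.Eventually.of_forall fun t => ?_)
    show |v t| ^ (2:ℝ) = v t ^ 2
    rw [show ((2:ℝ)) = ((2:ℕ):ℝ) by norm_num, Real.rpow_natCast, sq_abs]
  rw [hA, hB] at key
  have hAnn : 0 ≤ ∫ t, (u t)^2 ∂ν := integral_nonneg fun t => sq_nonneg _
  have hBnn : 0 ≤ ∫ t, (v t)^2 ∂ν := integral_nonneg fun t => sq_nonneg _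
  calc (∫ t, u t * v t ∂ν) ^ 2 = |∫ t, u t * v t ∂ν| ^ 2 := (sq_abs _).symm
    _ ≤ (∫ t, |u t| * |v t| ∂ν) ^ 2 := by
        apply pow_le_pow_left₀ (abs_nonneg _) (habs) 2
    _ ≤ ((∫ t, (u t)^2 ∂ν) ^ ((1:ℝ)/2) * (∫ t, (v t)^2 ∂ν) ^ ((1:ℝ)/2)) ^ 2 := by
        apply pow_le_pow_left₀ (integral_nonneg fun t => mul_nonneg (abs_nonneg _) (abs_nonneg _)) key 2
    _ = (∫ t, (u t)^2 ∂ν) * (∫ t, (v t)^2 ∂ν) := by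
        rw [mul_pow, ← Real.rpow_natCast ((∫ t, (u t)^2 ∂ν) ^ ((1:ℝ)/2)) 2,
          ← Real.rpow_natCast ((∫ t, (v t)^2 ∂ν) ^ ((1:ℝ)/2)) 2,
          ← Real.rpow_mul hAnn, ← Real.rpow_mul hBnn]
        norm_num


abbrev E3 := EuclideanSpace ℝ (Fin 3)

lemma ray_bound (φ : E3 → ℝ) (hφ : ContDiff ℝ (⊤ : ℕ∞) φ)
    {a R : ℝ} (ha : 0 < a) (hφ0 : ∀ x ∈ Metric.ball (0 : E3) a, φ x = 0)
    (ω : E3) (hω : ‖ω‖ = 1) {r : ℝ} (har : a ≤ r) (hrR : r ≤ R) :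
    (φ (r • ω)) ^ 2 ≤ a⁻¹ * ∫ t in Set.Ioc a R, t ^ 2 * ‖fderiv ℝ φ (t • ω)‖ ^ 2 := by
  have hφc : Continuous φ := hφ.continuous
  have hf'c : Continuous (fderiv ℝ φ) := hφ.continuous_fderiv (by simp)
  set D : ℝ → ℝ := fun t => fderiv ℝ φ (t • ω) ω with hD_def
  have hDc : Continuous D := by
    exact (hf'c.comp (continuous_id.smul continuous_const)).clm_apply continuous_const
  have hD : ∀ t : ℝ, HasDerivAt (fun s => φ (s • ω)) (D t) t := by
    intro t
    have h1 : HasDerivAt (fun s : ℝ => s • ω) ω t := by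
      simpa using (hasDerivAt_id t).smul_const ω
    exact ((hφ.differentiable (by simp)).differentiableAt.hasFDerivAt).comp_hasDerivAt t h1
  have hψa : φ (a • ω) = 0 := by
    have hEq : Set.EqOn φ 0 (closure (Metric.ball (0 : E3) a)) :=
      (Set.EqOn.closure (fun x hx => hφ0 x hx) hφc continuous_const)
    have : (a • ω) ∈ closure (Metric.ball (0 : E3) a) := by
      rw [closure_ball (0 : E3) ha.ne', Metric.mem_closedBall, dist_zero_right,
        norm_smul, hω, Real.norm_eq_abs, abs_of_pos ha, mul_one]
    simpa using hEq this
  have hftc : φ (r • ω) = ∫ t in a..r, D t := by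
    rw [intervalIntegral.integral_eq_sub_of_hasDerivAt (fun t _ => hD t)
      (hDc.intervalIntegrable a r), hψa, sub_zero]
  -- pass to set integral over Ioc a r with u * v
  set ν : Measure ℝ := volume.restrict (Set.Ioc a r) with hν
  have hfin : IsFiniteMeasure ν := by
    constructor; rw [hν]; simp [Measure.restrict_apply, Real.volume_Ioc]
  set u : ℝ → ℝ := fun t => t⁻¹ with hu_def
  set v : ℝ → ℝ := fun t => t * D t with hv_def
  have hDuv : ∫ t in a..r, D t = ∫ t, u t * v t ∂ν := by
    rw [intervalIntegral.integral_of_le har, hν]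
    refine setIntegral_congr_fun measurableSet_Ioc (fun t ht => ?_)
    have ht0 : t ≠ 0 := (lt_of_lt_of_le ha ht.1.le).ne'
    show D t = t⁻¹ * (t * D t)
    rw [← mul_assoc, inv_mul_cancel₀ ht0, one_mul]
  have hvc : Continuous v := continuous_id.mul hDc
  have hu2 : MemLp u 2 ν := by
    refine MemLp.of_bound ?_ a⁻¹ ?_
    · exact (measurable_inv).aestronglyMeasurable
    · rw [hν]
      filter_upwards [ae_restrict_mem measurableSet_Ioc] with t ht
      rw [Real.norm_eq_abs, abs_of_pos (inv_pos.2 (lt_of_lt_of_le ha ht.1.le))]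
      exact inv_anti₀ ha ht.1.le
  have hv2 : MemLp v 2 ν := by
    obtain ⟨M, hM⟩ := (isCompact_Icc (a := a) (b := r)).exists_bound_of_continuousOn
      hvc.continuousOn
    refine MemLp.of_bound hvc.aestronglyMeasurable M ?_
    rw [hν]
    filter_upwards [ae_restrict_mem measurableSet_Ioc] with t ht
    exact hM t ⟨ht.1.le, ht.2⟩
  have hcs := cs_int (ν := ν) hu2 hv2
  -- ∫ u² ≤ a⁻¹
  have hu2val : ∫ t, (u t) ^ 2 ∂ν ≤ a⁻¹ := by
    have hderiv : ∀ t ∈ Set.uIcc a r, HasDerivAt (fun s : ℝ => -s⁻¹) ((u t)^2) t := by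
      intro t ht
      rw [Set.uIcc_of_le har] at ht
      have ht0 : t ≠ 0 := (lt_of_lt_of_le ha ht.1).ne'
      have := (hasDerivAt_inv ht0).neg
      simpa [hu_def, inv_pow, Pi.neg_def] using this
    have hint : IntervalIntegrable (fun t => (u t)^2) volume a r := by
      apply ContinuousOn.intervalIntegrable
      rw [Set.uIcc_of_le har]
      exact (continuousOn_inv₀.mono
        (fun s hs => Set.mem_compl_singleton_iff.2 (lt_of_lt_of_le ha hs.1).ne')).pow 2
    have := intervalIntegral.integral_eq_sub_of_hasDerivAt hderiv hint
    rw [intervalIntegral.integral_of_le har] at this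
    rw [hν, this]
    have : 0 < r := lt_of_lt_of_le ha har
    linarith [inv_pos.2 this]
  -- ∫ v² ≤ ∫_{Ioc a R} t²‖fderiv‖²
  have hbig : IntegrableOn (fun t => t ^ 2 * ‖fderiv ℝ φ (t • ω)‖ ^ 2) (Set.Ioc a R) volume := by
    apply Continuous.integrableOn_Ioc
    exact (continuous_pow 2).mul
      (((hf'c.comp (continuous_id.smul continuous_const)).norm).pow 2)
  have hv2val : ∫ t, (v t) ^ 2 ∂ν ≤ ∫ t in Set.Ioc a R, t ^ 2 * ‖fderiv ℝ φ (t • ω)‖ ^ 2 := by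
    rw [hν]
    calc ∫ t in Set.Ioc a r, (v t) ^ 2
        ≤ ∫ t in Set.Ioc a r, t ^ 2 * ‖fderiv ℝ φ (t • ω)‖ ^ 2 := by
          refine setIntegral_mono_on ((hvc.pow 2).integrableOn_Ioc)
            (hbig.mono_set (Set.Ioc_subset_Ioc_right hrR)) measurableSet_Ioc (fun t ht => ?_)
          have hb : |D t| ≤ ‖fderiv ℝ φ (t • ω)‖ := by
            calc |D t| = ‖fderiv ℝ φ (t • ω) ω‖ := rfl
            _ ≤ ‖fderiv ℝ φ (t • ω)‖ * ‖ω‖ := ContinuousLinearMap.le_opNorm _ _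
            _ = ‖fderiv ℝ φ (t • ω)‖ := by rw [hω, mul_one]
          have : (v t)^2 = t^2 * (D t)^2 := by rw [hv_def]; ring
          rw [this]
          have h1 : (D t)^2 ≤ ‖fderiv ℝ φ (t • ω)‖^2 := by
            rw [← sq_abs (D t)]
            exact pow_le_pow_left₀ (abs_nonneg _) hb 2
          exact mul_le_mul_of_nonneg_left h1 (sq_nonneg t)
      _ ≤ ∫ t in Set.Ioc a R, t ^ 2 * ‖fderiv ℝ φ (t • ω)‖ ^ 2 := by
          apply setIntegral_mono_set hbig
          · filter_upwards with t using mul_nonneg (sq_nonneg _) (sq_nonneg _)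
          · exact HasSubset.Subset.eventuallyLE (Set.Ioc_subset_Ioc_right hrR)
  have hKnn : 0 ≤ ∫ t, (v t) ^ 2 ∂ν := integral_nonneg (fun t => sq_nonneg _)
  calc (φ (r • ω)) ^ 2 = (∫ t, u t * v t ∂ν) ^ 2 := by rw [hftc, hDuv]
    _ ≤ (∫ t, (u t) ^ 2 ∂ν) * (∫ t, (v t) ^ 2 ∂ν) := hcs
    _ ≤ a⁻¹ * ∫ t in Set.Ioc a R, t ^ 2 * ‖fderiv ℝ φ (t • ω)‖ ^ 2 := by
        apply mul_le_mul hu2val hv2val hKnn (inv_nonneg.2 ha.le)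

/-- Hardy estimate for the corrector gradient: if `g ≥ 0` satisfies
`g(x) ≤ ε^α/|x|²` for `δε^α ≤ |x| ≤ η/2` and vanishes elsewhere, then for every smooth
`φ` vanishing on `B_{δε^α}(0)`, `∫ g |φ|² ≤ C η ∫_{B_{η/2}} |∇φ|²` with `C = C(δ)`. -/
theorem hardy_corrector (δ : ℝ) (hδ : 0 < δ) :
    ∃ C : ℝ, 0 < C ∧ ∀ (α ε η : ℝ), 1 ≤ α → 0 < ε → ε < 1 →
      ε ^ α ≤ η → η ≤ ε →
      ∀ g : EuclideanSpace ℝ (Fin 3) → ℝ, Measurable g →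
        (∀ x, 0 ≤ g x) →
        (∀ x : EuclideanSpace ℝ (Fin 3),
          δ * ε ^ α ≤ ‖x‖ → ‖x‖ ≤ η / 2 → g x ≤ ε ^ α / ‖x‖ ^ 2) →
        (∀ x : EuclideanSpace ℝ (Fin 3),
          (‖x‖ < δ * ε ^ α ∨ η / 2 < ‖x‖) → g x = 0) →
        ∀ φ : EuclideanSpace ℝ (Fin 3) → ℝ, ContDiff ℝ (⊤ : ℕ∞) φ →
          (∀ x ∈ Metric.ball (0 : EuclideanSpace ℝ (Fin 3)) (δ * ε ^ α), φ x = 0) →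
          ∫ x, g x * (φ x) ^ 2
            ≤ C * η * ∫ x in Metric.ball (0 : EuclideanSpace ℝ (Fin 3)) (η / 2),
                ‖fderiv ℝ φ x‖ ^ 2 := by
  refine ⟨(2 * δ)⁻¹, inv_pos.2 (by linarith), ?_⟩
  intro α ε η hα hε0 hε1 hεη hηε g hgm hg0 hgub hgz φ hφ hφ0
  have hεα : 0 < ε ^ α := Real.rpow_pos_of_pos hε0 α
  set a : ℝ := δ * ε ^ α with ha_def
  have ha : 0 < a := mul_pos hδ hεα
  set R : ℝ := η / 2 with hR_def
  have hη0 : 0 < η := lt_of_lt_of_le hεα hεη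
  have hR : 0 < R := by rw [hR_def]; linarith
  have hφc : Continuous φ := hφ.continuous
  have hf'c : Continuous (fderiv ℝ φ) := hφ.continuous_fderiv (by simp)
  have hfd2c : Continuous (fun x : E3 => ‖fderiv ℝ φ x‖ ^ 2) := hf'c.norm.pow 2
  set I : ℝ := ∫ x in Metric.ball (0 : E3) R, ‖fderiv ℝ φ x‖ ^ 2 with hI_def
  have hI0 : 0 ≤ I := setIntegral_nonneg measurableSet_ball (fun x _ => sq_nonneg _)
  -- the dominating function h and the gradient function F₂
  set S : Set E3 := {x | a ≤ ‖x‖ ∧ ‖x‖ ≤ R} with hS_def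
  have hSmeas : MeasurableSet S := by
    have : S = {x : E3 | a ≤ ‖x‖} ∩ {x : E3 | ‖x‖ ≤ R} := by ext x; simp [hS_def]
    rw [this]
    exact ((isClosed_le continuous_const continuous_norm).measurableSet).inter
      ((isClosed_le continuous_norm continuous_const).measurableSet)
  set h : E3 → ℝ := S.indicator (fun x => ε ^ α / ‖x‖ ^ 2 * (φ x) ^ 2) with hh_def
  set S' : Set E3 := {x | a < ‖x‖ ∧ ‖x‖ ≤ R} with hS'_def
  have hS'meas : MeasurableSet S' := by
    have : S' = {x : E3 | a < ‖x‖} ∩ {x : E3 | ‖x‖ ≤ R} := by ext x; simp [hS'_def]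
    rw [this]
    exact ((isOpen_lt continuous_const continuous_norm).measurableSet).inter
      ((isClosed_le continuous_norm continuous_const).measurableSet)
  set F₂ : E3 → ℝ := S'.indicator (fun x => ‖fderiv ℝ φ x‖ ^ 2) with hF₂_def
  have hhm : Measurable h :=
    ((measurable_const.div ((measurable_norm).pow_const 2)).mul
      ((hφc.measurable).pow_const 2)).indicator hSmeas
  have hF₂m : Measurable F₂ := (hfd2c.measurable).indicator hS'meas
  -- pointwise domination
  have hgh : ∀ x, g x * (φ x) ^ 2 ≤ h x := by
    intro x
    by_cases hx : x ∈ S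
    · rw [hh_def, Set.indicator_of_mem hx]
      exact mul_le_mul_of_nonneg_right (hgub x hx.1 hx.2) (sq_nonneg _)
    · rw [hh_def, Set.indicator_of_notMem hx]
      have hx' : ‖x‖ < a ∨ R < ‖x‖ := by
        by_contra hc
        push_neg at hc
        exact hx ⟨hc.1, hc.2⟩
      rw [hgz x hx', zero_mul]
  -- the polar-coordinates transport identity
  have hdim : Module.finrank ℝ E3 - 1 = 2 := by
    rw [finrank_euclideanSpace_fin]
  set ν2 : Measure (Set.Ioi (0:ℝ)) := Measure.volumeIoiPow 2 with hν2_def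
  set prodM : Measure (Metric.sphere (0:E3) 1 × Set.Ioi (0:ℝ)) :=
    (volume : Measure E3).toSphere.prod ν2 with hprodM_def
  have transport : ∀ f : E3 → ℝ≥0∞, Measurable f →
      ∫⁻ x, f x = ∫⁻ p : Metric.sphere (0:E3) 1 × Set.Ioi (0:ℝ), f (p.2.1 • p.1.1) ∂prodM := by
    intro f hf
    have h0 : ∫⁻ x, f x ∂(volume : Measure E3)
        = ∫⁻ x : ({(0:E3)}ᶜ : Set E3), f x.1
            ∂((volume : Measure E3).comap (Subtype.val : ({(0:E3)}ᶜ : Set E3) → E3)) := by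
      rw [lintegral_subtype_comap (measurableSet_singleton (0:E3)).compl,
        restrict_compl_singleton]
    have hmap : Measurable fun p : Metric.sphere (0:E3) 1 × Set.Ioi (0:ℝ) =>
        f (p.2.1 • p.1.1) := by
      apply hf.comp
      exact ((continuous_subtype_val.comp continuous_snd).smul
        (continuous_subtype_val.comp continuous_fst)).measurable
    have hMP := (volume : Measure E3).measurePreserving_homeomorphUnitSphereProd
    rw [hdim] at hMP
    have h1 := hMP.lintegral_comp hmap
    rw [h0, ← h1]
    refine lintegral_congr fun x => ?_
    congr 1
    have hx0 : (x : E3) ≠ 0 := x.2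
    simp only [homeomorphUnitSphereProd_apply_snd_coe, homeomorphUnitSphereProd_apply_fst_coe]
    rw [smul_inv_smul₀ (norm_ne_zero_iff.2 hx0)]
  -- integration against the density r^2
  have density_eval : ∀ ψ : ℝ → ℝ≥0∞, Measurable ψ →
      ∫⁻ r : Set.Ioi (0:ℝ), ψ r.1 ∂ν2
        = ∫⁻ t in Set.Ioi (0:ℝ), ENNReal.ofReal (t ^ 2) * ψ t := by
    intro ψ hψ
    have hg : Measurable fun r : Set.Ioi (0:ℝ) => ψ r.1 := hψ.comp measurable_subtype_coe
    rw [hν2_def, Measure.volumeIoiPow,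
      lintegral_withDensity_eq_lintegral_mul _
        ((measurable_subtype_coe.pow_const 2).ennreal_ofReal) hg]
    simp only [Pi.mul_apply]
    exact lintegral_subtype_comap measurableSet_Ioi fun t => ENNReal.ofReal (t ^ 2) * ψ t
  -- the ray integral K
  set Kf : E3 → ℝ := fun w => ∫ t in Set.Ioc a R, t ^ 2 * ‖fderiv ℝ φ (t • w)‖ ^ 2 with hKf_def
  have hKc : ∀ w : E3, Continuous fun t : ℝ => t ^ 2 * ‖fderiv ℝ φ (t • w)‖ ^ 2 := fun w =>
    (continuous_pow 2).mul (((hf'c.comp (continuous_id.smul continuous_const)).norm).pow 2)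
  have hKint : ∀ w : E3, IntegrableOn (fun t => t ^ 2 * ‖fderiv ℝ φ (t • w)‖ ^ 2)
      (Set.Ioc a R) volume := fun w => (hKc w).integrableOn_Ioc
  have hKnn : ∀ w : E3, 0 ≤ Kf w := fun w =>
    setIntegral_nonneg measurableSet_Ioc fun t _ => mul_nonneg (sq_nonneg _) (sq_nonneg _)
  -- A3 : ofReal (Kf ω) = lintegral of F₂ along the ray
  have hA3 : ∀ ω : E3, ‖ω‖ = 1 →
      ENNReal.ofReal (Kf ω) = ∫⁻ r : Set.Ioi (0:ℝ), ENNReal.ofReal (F₂ (r.1 • ω)) ∂ν2 := by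
    intro ω hω
    have hψm : Measurable fun t : ℝ => ENNReal.ofReal (F₂ (t • ω)) :=
      ENNReal.measurable_ofReal.comp (hF₂m.comp (measurable_id.smul_const ω))
    rw [density_eval _ hψm]
    have hcongr : ∫⁻ t in Set.Ioi (0:ℝ), ENNReal.ofReal (t ^ 2) * ENNReal.ofReal (F₂ (t • ω))
        = ∫⁻ t in Set.Ioi (0:ℝ),
            (Set.Ioc a R).indicator
              (fun t => ENNReal.ofReal (t ^ 2 * ‖fderiv ℝ φ (t • ω)‖ ^ 2)) t := by
      refine setLIntegral_congr_fun measurableSet_Ioi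
        (fun t ht => ?_)
      have ht0 : (0:ℝ) < t := ht
      have hnorm : ‖t • ω‖ = t := by
        rw [norm_smul, hω, mul_one, Real.norm_eq_abs, abs_of_pos ht0]
      by_cases hmem : t ∈ Set.Ioc a R
      · have hmem' : t • ω ∈ S' := by
          rw [hS'_def]
          exact ⟨by rw [hnorm]; exact hmem.1, by rw [hnorm]; exact hmem.2⟩
        rw [Set.indicator_of_mem hmem, hF₂_def, Set.indicator_of_mem hmem',
          ENNReal.ofReal_mul (sq_nonneg t)]
      · have hmem' : t • ω ∉ S' := by
          rw [hS'_def]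
          intro hc
          exact hmem ⟨by rw [← hnorm]; exact hc.1, by rw [← hnorm]; exact hc.2⟩
        rw [Set.indicator_of_notMem hmem, hF₂_def, Set.indicator_of_notMem hmem']
        simp
    have hsub : Set.Ioc a R ⊆ Set.Ioi (0:ℝ) := fun t ht => lt_trans ha ht.1
    rw [hcongr, lintegral_indicator measurableSet_Ioc,
      Measure.restrict_restrict measurableSet_Ioc, Set.inter_eq_left.2 hsub]
    rw [hKf_def]
    rw [← ofReal_integral_eq_lintegral_ofReal (hKint ω)
      (Filter.Eventually.of_forall fun t => mul_nonneg (sq_nonneg _) (sq_nonneg _))]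
  -- A2 : the weighted integral of the indicator of [a, R] · r⁻²
  have hA2 : ∫⁻ r : Set.Ioi (0:ℝ),
      (Set.Icc a R).indicator (fun s => (ENNReal.ofReal (s ^ 2))⁻¹) r.1 ∂ν2
        ≤ ENNReal.ofReal R := by
    have hψm : Measurable fun s : ℝ => (Set.Icc a R).indicator
        (fun s => (ENNReal.ofReal (s ^ 2))⁻¹) s :=
      ((ENNReal.measurable_ofReal.comp (measurable_id.pow_const 2)).inv).indicator
        measurableSet_Icc
    rw [density_eval _ hψm]
    have hpt : ∀ t ∈ Set.Ioi (0:ℝ),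
        ENNReal.ofReal (t ^ 2) * (Set.Icc a R).indicator
          (fun s => (ENNReal.ofReal (s ^ 2))⁻¹) t
          ≤ (Set.Icc a R).indicator (fun _ => 1) t := by
      intro t ht
      by_cases hmem : t ∈ Set.Icc a R
      · rw [Set.indicator_of_mem hmem, Set.indicator_of_mem hmem]
        have ht0 : (0:ℝ) < t := ht
        have ht2 : (0:ℝ) < t ^ 2 := pow_pos ht0 2
        rw [ENNReal.mul_inv_cancel (ENNReal.ofReal_pos.2 ht2).ne' ENNReal.ofReal_ne_top]
      · rw [Set.indicator_of_notMem hmem, Set.indicator_of_notMem hmem, mul_zero]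
    calc ∫⁻ t in Set.Ioi (0:ℝ), ENNReal.ofReal (t ^ 2) * (Set.Icc a R).indicator
          (fun s => (ENNReal.ofReal (s ^ 2))⁻¹) t
        ≤ ∫⁻ t in Set.Ioi (0:ℝ), (Set.Icc a R).indicator (fun _ => 1) t := by
          refine lintegral_mono_ae ?_
          filter_upwards [ae_restrict_mem measurableSet_Ioi] with t ht using hpt t ht
      _ = (volume.restrict (Set.Ioi (0:ℝ))) (Set.Icc a R) := by
          rw [lintegral_indicator measurableSet_Icc]; simp
      _ ≤ volume (Set.Icc a R) := Measure.restrict_le_self _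
      _ = ENNReal.ofReal (R - a) := by rw [Real.volume_Icc]
      _ ≤ ENNReal.ofReal R := ENNReal.ofReal_le_ofReal (by linarith)
  -- A1 + claim A : inner integral bound
  have claimA : ∀ ω : Metric.sphere (0:E3) 1,
      ∫⁻ r : Set.Ioi (0:ℝ), ENNReal.ofReal (h (r.1 • (ω:E3))) ∂ν2
        ≤ ENNReal.ofReal (ε ^ α * a⁻¹ * R)
            * ∫⁻ r : Set.Ioi (0:ℝ), ENNReal.ofReal (F₂ (r.1 • (ω:E3))) ∂ν2 := by
    intro ω
    have hω1 : ‖(ω:E3)‖ = 1 := mem_sphere_zero_iff_norm.1 ω.2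
    have hA1 : ∀ r : Set.Ioi (0:ℝ),
        ENNReal.ofReal (h (r.1 • (ω:E3)))
          ≤ ENNReal.ofReal (ε ^ α * a⁻¹ * Kf (ω:E3))
              * (Set.Icc a R).indicator (fun s => (ENNReal.ofReal (s ^ 2))⁻¹) r.1 := by
      intro r
      have hr0 : (0:ℝ) < r.1 := r.2
      have hnorm : ‖r.1 • (ω:E3)‖ = r.1 := by
        rw [norm_smul, hω1, mul_one, Real.norm_eq_abs, abs_of_pos hr0]
      by_cases hmem : r.1 ∈ Set.Icc a R
      · rw [Set.indicator_of_mem hmem]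
        have hmemS : r.1 • (ω:E3) ∈ S := by
          rw [hS_def]; exact ⟨by rw [hnorm]; exact hmem.1, by rw [hnorm]; exact hmem.2⟩
        rw [hh_def, Set.indicator_of_mem hmemS]
        have hφb : (φ (r.1 • (ω:E3))) ^ 2 ≤ a⁻¹ * Kf (ω:E3) :=
          ray_bound φ hφ ha hφ0 (ω:E3) hω1 hmem.1 hmem.2
        have hhb : ε ^ α / ‖r.1 • (ω:E3)‖ ^ 2 * (φ (r.1 • (ω:E3))) ^ 2
            ≤ ε ^ α * a⁻¹ * Kf (ω:E3) * (r.1 ^ 2)⁻¹ := by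
          rw [hnorm]
          have h1 : ε ^ α / r.1 ^ 2 * (φ (r.1 • (ω:E3))) ^ 2
              ≤ ε ^ α / r.1 ^ 2 * (a⁻¹ * Kf (ω:E3)) := by
            exact mul_le_mul_of_nonneg_left hφb (div_nonneg hεα.le (sq_nonneg _))
          calc ε ^ α / r.1 ^ 2 * (φ (r.1 • (ω:E3))) ^ 2
              ≤ ε ^ α / r.1 ^ 2 * (a⁻¹ * Kf (ω:E3)) := h1
            _ = ε ^ α * a⁻¹ * Kf (ω:E3) * (r.1 ^ 2)⁻¹ := by ring
        calc ENNReal.ofReal (ε ^ α / ‖r.1 • (ω:E3)‖ ^ 2 * (φ (r.1 • (ω:E3))) ^ 2)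
            ≤ ENNReal.ofReal (ε ^ α * a⁻¹ * Kf (ω:E3) * (r.1 ^ 2)⁻¹) :=
              ENNReal.ofReal_le_ofReal hhb
          _ = ENNReal.ofReal (ε ^ α * a⁻¹ * Kf (ω:E3)) * (ENNReal.ofReal (r.1 ^ 2))⁻¹ := by
              rw [ENNReal.ofReal_mul (mul_nonneg (mul_nonneg hεα.le (inv_nonneg.2 ha.le))
                (hKnn _)), ENNReal.ofReal_inv_of_pos (pow_pos hr0 2)]
      · rw [Set.indicator_of_notMem hmem, mul_zero]
        have hnotS : r.1 • (ω:E3) ∉ S := by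
          rw [hS_def]; intro hc
          exact hmem ⟨by rw [← hnorm]; exact hc.1, by rw [← hnorm]; exact hc.2⟩
        rw [hh_def, Set.indicator_of_notMem hnotS]
        simp
    calc ∫⁻ r : Set.Ioi (0:ℝ), ENNReal.ofReal (h (r.1 • (ω:E3))) ∂ν2
        ≤ ∫⁻ r : Set.Ioi (0:ℝ), ENNReal.ofReal (ε ^ α * a⁻¹ * Kf (ω:E3))
            * (Set.Icc a R).indicator (fun s => (ENNReal.ofReal (s ^ 2))⁻¹) r.1 ∂ν2 :=
          lintegral_mono fun r => hA1 r
      _ = ENNReal.ofReal (ε ^ α * a⁻¹ * Kf (ω:E3))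
            * ∫⁻ r : Set.Ioi (0:ℝ),
                (Set.Icc a R).indicator (fun s => (ENNReal.ofReal (s ^ 2))⁻¹) r.1 ∂ν2 :=
          lintegral_const_mul' _ _ ENNReal.ofReal_ne_top
      _ ≤ ENNReal.ofReal (ε ^ α * a⁻¹ * Kf (ω:E3)) * ENNReal.ofReal R :=
          mul_le_mul_right hA2 _
      _ = ENNReal.ofReal (ε ^ α * a⁻¹ * R) * ENNReal.ofReal (Kf (ω:E3)) := by
          rw [← ENNReal.ofReal_mul (mul_nonneg (mul_nonneg hεα.le (inv_nonneg.2 ha.le))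
            (hKnn _)), ← ENNReal.ofReal_mul
            (mul_nonneg (mul_nonneg hεα.le (inv_nonneg.2 ha.le)) hR.le)]
          congr 1
          ring
      _ = ENNReal.ofReal (ε ^ α * a⁻¹ * R)
            * ∫⁻ r : Set.Ioi (0:ℝ), ENNReal.ofReal (F₂ (r.1 • (ω:E3))) ∂ν2 := by
          rw [hA3 (ω:E3) hω1]
  -- measurability on the product space
  have hsmul_meas : Measurable fun p : Metric.sphere (0:E3) 1 × Set.Ioi (0:ℝ) =>
      (p.2.1 • (p.1.1 : E3)) :=
    ((continuous_subtype_val.comp continuous_snd).smul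
      (continuous_subtype_val.comp continuous_fst)).measurable
  -- bound of the sphere integral of F₂ by I
  have hF₂I : ∫⁻ x, ENNReal.ofReal (F₂ x) ≤ ENNReal.ofReal I := by
    have hind : ∀ x, ENNReal.ofReal (F₂ x)
        = S'.indicator (fun x => ENNReal.ofReal (‖fderiv ℝ φ x‖ ^ 2)) x := by
      intro x
      by_cases hx : x ∈ S'
      · rw [hF₂_def, Set.indicator_of_mem hx, Set.indicator_of_mem hx]
      · rw [hF₂_def, Set.indicator_of_notMem hx, Set.indicator_of_notMem hx,
          ENNReal.ofReal_zero]
    calc ∫⁻ x, ENNReal.ofReal (F₂ x)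
        = ∫⁻ x in S', ENNReal.ofReal (‖fderiv ℝ φ x‖ ^ 2) := by
          rw [lintegral_congr hind, lintegral_indicator hS'meas]
      _ ≤ ∫⁻ x in Metric.closedBall (0:E3) R, ENNReal.ofReal (‖fderiv ℝ φ x‖ ^ 2) := by
          apply lintegral_mono_set
          intro x hx
          rw [Metric.mem_closedBall, dist_zero_right]
          exact hx.2
      _ = ENNReal.ofReal (∫ x in Metric.closedBall (0:E3) R, ‖fderiv ℝ φ x‖ ^ 2) := by
          rw [← ofReal_integral_eq_lintegral_ofReal
            (hfd2c.continuousOn.integrableOn_compact (isCompact_closedBall _ _))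
            (Filter.Eventually.of_forall fun x => sq_nonneg _)]
      _ = ENNReal.ofReal I := by
          rw [hI_def]
          congr 1
          apply setIntegral_congr_set
          rw [MeasureTheory.ae_eq_set]
          constructor
          · rw [Metric.closedBall_diff_ball]
            exact Measure.addHaar_sphere _ _ _
          · rw [Set.diff_eq_empty.2 Metric.ball_subset_closedBall]
            exact measure_empty
  -- main lintegral estimate
  have hcR : ε ^ α * a⁻¹ * R = (2 * δ)⁻¹ * η := by
    rw [ha_def, hR_def]
    field_simp
  have main : ∫⁻ x, ENNReal.ofReal (g x * (φ x) ^ 2)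
      ≤ ENNReal.ofReal ((2 * δ)⁻¹ * η) * ENNReal.ofReal I := by
    calc ∫⁻ x, ENNReal.ofReal (g x * (φ x) ^ 2)
        ≤ ∫⁻ x, ENNReal.ofReal (h x) :=
          lintegral_mono fun x => ENNReal.ofReal_le_ofReal (hgh x)
      _ = ∫⁻ p : Metric.sphere (0:E3) 1 × Set.Ioi (0:ℝ),
            ENNReal.ofReal (h (p.2.1 • p.1.1)) ∂prodM :=
          transport _ (ENNReal.measurable_ofReal.comp hhm)
      _ = ∫⁻ ω : Metric.sphere (0:E3) 1, ∫⁻ r : Set.Ioi (0:ℝ),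
            ENNReal.ofReal (h (r.1 • (ω:E3))) ∂ν2 ∂(volume : Measure E3).toSphere := by
          rw [hprodM_def]
          exact lintegral_prod _ ((ENNReal.measurable_ofReal.comp
            (hhm.comp hsmul_meas)).aemeasurable)
      _ ≤ ∫⁻ ω : Metric.sphere (0:E3) 1, ENNReal.ofReal (ε ^ α * a⁻¹ * R)
            * ∫⁻ r : Set.Ioi (0:ℝ),
                ENNReal.ofReal (F₂ (r.1 • (ω:E3))) ∂ν2 ∂(volume : Measure E3).toSphere :=
          lintegral_mono fun ω => claimA ω
      _ = ENNReal.ofReal (ε ^ α * a⁻¹ * R) * ∫⁻ ω : Metric.sphere (0:E3) 1,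
            ∫⁻ r : Set.Ioi (0:ℝ),
              ENNReal.ofReal (F₂ (r.1 • (ω:E3))) ∂ν2 ∂(volume : Measure E3).toSphere :=
          lintegral_const_mul' _ _ ENNReal.ofReal_ne_top
      _ = ENNReal.ofReal (ε ^ α * a⁻¹ * R) * ∫⁻ x, ENNReal.ofReal (F₂ x) := by
          congr 1
          rw [transport (fun x => ENNReal.ofReal (F₂ x)) (ENNReal.measurable_ofReal.comp hF₂m), hprodM_def]
          exact (lintegral_prod _ ((ENNReal.measurable_ofReal.comp
            (hF₂m.comp hsmul_meas)).aemeasurable)).symm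
      _ ≤ ENNReal.ofReal (ε ^ α * a⁻¹ * R) * ENNReal.ofReal I :=
          mul_le_mul_right hF₂I _
      _ = ENNReal.ofReal ((2 * δ)⁻¹ * η) * ENNReal.ofReal I := by rw [hcR]
  -- conclusion
  have hnn : 0 ≤ᵐ[volume] fun x : E3 => g x * (φ x) ^ 2 :=
    Filter.Eventually.of_forall fun x => mul_nonneg (hg0 x) (sq_nonneg _)
  have hmeas : AEStronglyMeasurable (fun x : E3 => g x * (φ x) ^ 2) volume :=
    (hgm.mul ((hφc.measurable).pow_const 2)).aestronglyMeasurable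
  rw [integral_eq_lintegral_of_nonneg_ae hnn hmeas]
  calc (∫⁻ x, ENNReal.ofReal (g x * (φ x) ^ 2)).toReal
      ≤ (ENNReal.ofReal ((2 * δ)⁻¹ * η) * ENNReal.ofReal I).toReal := by
        apply ENNReal.toReal_mono (ENNReal.mul_ne_top ENNReal.ofReal_ne_top
          ENNReal.ofReal_ne_top) main
    _ = (2 * δ)⁻¹ * η * I := by
        have hc0 : 0 ≤ (2 * δ)⁻¹ * η := mul_nonneg (inv_nonneg.2 (by linarith)) hη0.le
        rw [← ENNReal.ofReal_mul hc0, ENNReal.toReal_ofReal (mul_nonneg hc0 hI0)]
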